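/- Let I ⊆ R be a monomial ideal with linear quotients whose decomposition function b is regular, let m ∈ G(I) with |set(m)| = p, and let σ be a permutation of set(m) such that ch(m,set(m),σ) is nondegenerate. Then the p+1 exponent vectors v_0, v_1, …, v_p of the monomials m_0 = m and m_i = b(x_{σ_i} · m_{i−1}) (1 ≤ i ≤ p), regarded as points of ℝ^n, are affinely independent; consequently ch(m,set(m),σ) is a geometric simplex of dimension p. -/

import Mathlib

open MvPolynomial

/-- The monomial ideal generated by a set of exponent vectors. -/
noncomputable def genIdeal (K : Type*) [Field K] {n : ℕ} (ms : Set (Fin n →₀ ℕ)) :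
    Ideal (MvPolynomial (Fin n) K) :=
  Ideal.span ((fun u => MvPolynomial.monomial u (1 : K)) '' ms)

/-- The colon ideal `⟨m_1, …, m_{j-1}⟩ : m_j`. -/
noncomputable def colonJ (K : Type*) [Field K] {n k : ℕ} (m : Fin k → (Fin n →₀ ℕ))
    (j : Fin k) : Ideal (MvPolynomial (Fin n) K) :=
  Submodule.colon (genIdeal K {u | ∃ i : Fin k, i < j ∧ u = m i})
    (Ideal.span {MvPolynomial.monomial (m j) (1 : K)})

/-- `I` has linear quotients w.r.t. the ordering `m_1,…,m_k` of its generators: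
each colon ideal is generated by a subset of the variables. -/
def HasLinearQuotients (K : Type*) [Field K] {n k : ℕ}
    (m : Fin k → (Fin n →₀ ℕ)) : Prop :=
  ∀ j : Fin k, ∃ S : Set (Fin n),
    colonJ K m j = Ideal.span ((fun s => (MvPolynomial.X s : MvPolynomial (Fin n) K)) '' S)

/-- `set(m_j) = {i : x_i ∈ ⟨m_1,…,m_{j-1}⟩ : m_j}`. -/
def mset (K : Type*) [Field K] {n k : ℕ} (m : Fin k → (Fin n →₀ ℕ)) (j : Fin k) :
    Set (Fin n) :=
  {t | (MvPolynomial.X t : MvPolynomial (Fin n) K) ∈ colonJ K m j}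

/-- The `m i` are minimal monomial generators: none divides another. -/
def MinimalGens {n k : ℕ} (m : Fin k → (Fin n →₀ ℕ)) : Prop :=
  ∀ i j : Fin k, m i ≤ m j → i = j

/-- `b` is the decomposition function: for a monomial `u ∈ I`, `b u` is the smallest
index `j` with `u ∈ ⟨m_1,…,m_j⟩`. -/
def IsDecompositionFunction (K : Type*) [Field K] {n k : ℕ}
    (m : Fin k → (Fin n →₀ ℕ)) (b : (Fin n →₀ ℕ) → Fin k) : Prop :=
  ∀ u : Fin n →₀ ℕ, MvPolynomial.monomial u (1 : K) ∈ genIdeal K (Set.range m) →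
    (MvPolynomial.monomial u (1 : K) ∈ genIdeal K {v | ∃ i : Fin k, i ≤ b u ∧ v = m i}) ∧
    (∀ j : Fin k,
      MvPolynomial.monomial u (1 : K) ∈ genIdeal K {v | ∃ i : Fin k, i ≤ j ∧ v = m i} →
      b u ≤ j)

/-- The decomposition function is regular: `set(b(x_t·m)) ⊆ set(m)` for every
generator `m` and every `t ∈ set(m)`. -/
def IsRegularDecomp (K : Type*) [Field K] {n k : ℕ}
    (m : Fin k → (Fin n →₀ ℕ)) (b : (Fin n →₀ ℕ) → Fin k) : Prop :=
  ∀ j : Fin k, ∀ t ∈ mset K m j,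
    mset K m (b (m j + Finsupp.single t 1)) ⊆ mset K m j

/-- The sequence of vertex monomials `m_0 = m₀`, `m_{i+1} = b(x_{σ(i)} · m_i)` of the
simplex `ch(m, α, σ)` (here `σ` is 0-indexed: `σ 0, …, σ (p-1)` is the permutation). -/
noncomputable def chainSeq {n k : ℕ} (m : Fin k → (Fin n →₀ ℕ)) (b : (Fin n →₀ ℕ) → Fin k)
    (m0 : Fin n →₀ ℕ) (σ : ℕ → Fin n) : ℕ → (Fin n →₀ ℕ)
  | 0 => m0
  | i + 1 => m (b (chainSeq m b m0 σ i + Finsupp.single (σ i) 1))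

/-- `σ 0, …, σ (p-1)` is a permutation (an ordering) of the finite set `α`. -/
def PermOf {n : ℕ} (σ : ℕ → Fin n) (p : ℕ) (α : Finset (Fin n)) : Prop :=
  Set.InjOn σ (Set.Iio p) ∧ ∀ a : Fin n, a ∈ α ↔ ∃ i < p, σ i = a

/-- `ch(m,α,σ)` is nondegenerate: the vertex monomials `m_0, …, m_p` are pairwise
distinct. -/
def Nondeg {n k : ℕ} (m : Fin k → (Fin n →₀ ℕ)) (b : (Fin n →₀ ℕ) → Fin k)
    (m0 : Fin n →₀ ℕ) (σ : ℕ → Fin n) (p : ℕ) : Prop :=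
  Set.InjOn (chainSeq m b m0 σ) (Set.Iic p)

/-- A monomial (exponent vector) regarded as a point of `ℝⁿ`. -/
def toR {n : ℕ} (u : Fin n →₀ ℕ) : Fin n → ℝ := fun a => (u a : ℝ)

/-- The set of vertex monomials of `ch(m,α,σ)`. -/
def vertSet {n k : ℕ} (m : Fin k → (Fin n →₀ ℕ)) (b : (Fin n →₀ ℕ) → Fin k)
    (m0 : Fin n →₀ ℕ) (σ : ℕ → Fin n) (p : ℕ) : Set (Fin n →₀ ℕ) :=
  {v | ∃ i ≤ p, v = chainSeq m b m0 σ i}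

/-!
Write `m_0, …, m_p` for the vertices and `σ_1, …, σ_p` for the permutation. Since
`m_i = b(x_{σ_i} m_{i-1}) ≠ m_{i-1}`, minimality of `b` forces `σ_i ∈ set(m_{i-1})`, so by
regularity the sets `set(m_i)` decrease along the chain. Passing from `m_{i-1}` to `m_i`, the
exponent of a variable of `set(m_i)` cannot drop (again by minimality of `b`), and only the
exponent of `x_{σ_i}` can rise, by at most one; as `m_i ∤ m_{i-1}` it does rise. Hence in the
coordinates `σ_1, …, σ_p` the differences `v_i - v_0` form a unitriangular matrix.
-/

theorem linearIndependent_of_triangular {R M ι : Type*} [CommRing R] [AddCommGroup M]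
    [Module R M] [Fintype ι] [LinearOrder ι] (v : ι → M) (f : ι → M →ₗ[R] R)
    (hdiag : ∀ i, IsUnit (f i (v i))) (htri : ∀ i j, i < j → f j (v i) = 0) :
    LinearIndependent R v := by
  classical
  let A : Matrix ι ι R := Matrix.of fun j i => f j (v i)
  have hA : A.IsUpperTriangular := fun j i hij => htri i j hij
  have hunit : IsUnit A := by
    rw [Matrix.isUnit_iff_isUnit_det, Matrix.det_of_isUpperTriangular hA]
    exact IsUnit.prod_univ_iff.2 hdiag
  exact LinearIndependent.of_comp (LinearMap.pi f) (Matrix.linearIndependent_cols_of_isUnit hunit)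

theorem affineIndependent_of_triangular {R V P : Type*} [CommRing R] [AddCommGroup V]
    [Module R V] [AddTorsor V P] {p : ℕ} (q : Fin (p + 1) → P) (f : Fin p → V →ₗ[R] R)
    (hdiag : ∀ l, IsUnit (f l (q l.succ -ᵥ q 0)))
    (htri : ∀ i l, i < l → f l (q i.succ -ᵥ q 0) = 0) :
    AffineIndependent R q := by
  rw [affineIndependent_iff_linearIndependent_vsub R q 0,
    ← linearIndependent_equiv (finSuccAboveEquiv 0)]
  exact linearIndependent_of_triangular _ f hdiag htri

section MonomialIdeal

variable {K : Type*} [Field K] {n k : ℕ} {m : Fin k → (Fin n →₀ ℕ)} {b : (Fin n →₀ ℕ) → Fin k}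
  {i j : Fin k} {s t : Fin n} {u : Fin n →₀ ℕ}

theorem monomial_mem_genIdeal_iff (S : Set (Fin n →₀ ℕ)) (u : Fin n →₀ ℕ) :
    monomial u (1 : K) ∈ genIdeal K S ↔ ∃ v ∈ S, v ≤ u := by
  classical
  rw [genIdeal, mem_ideal_span_monomial_image]
  simp [support_monomial]

theorem mem_mset_iff : t ∈ mset K m j ↔ ∃ i < j, m i ≤ m j + Finsupp.single t 1 := by
  have hX : (X t : MvPolynomial (Fin n) K) * monomial (m j) 1 =
      monomial (m j + Finsupp.single t 1) 1 := by
    rw [X, monomial_mul, one_mul, add_comm]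
  change X t ∈ colonJ K m j ↔ _
  rw [colonJ, Submodule.mem_colon_span_singleton, smul_eq_mul, hX, monomial_mem_genIdeal_iff]
  exact ⟨fun ⟨_, ⟨i, hi, h⟩, hle⟩ => ⟨i, hi, h ▸ hle⟩,
    fun ⟨i, hi, hle⟩ => ⟨_, ⟨i, hi, rfl⟩, hle⟩⟩

namespace IsDecompositionFunction

theorem le_of_gen_le (hb : IsDecompositionFunction K m b) (h : m i ≤ u) : b u ≤ i :=
  (hb u ((monomial_mem_genIdeal_iff _ u).2 ⟨m i, ⟨i, rfl⟩, h⟩)).2 i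
    ((monomial_mem_genIdeal_iff _ u).2 ⟨m i, ⟨i, le_rfl, rfl⟩, h⟩)

theorem gen_le (hb : IsDecompositionFunction K m b) (h : m i ≤ u) : m (b u) ≤ u := by
  have hu := (monomial_mem_genIdeal_iff (K := K) (Set.range m) u).2 ⟨m i, ⟨i, rfl⟩, h⟩
  obtain ⟨_, ⟨r, hr, rfl⟩, hle⟩ := (monomial_mem_genIdeal_iff _ u).1 (hb u hu).1
  rwa [le_antisymm hr (hb.le_of_gen_le hle)] at hle

theorem gen_le_add_single (hb : IsDecompositionFunction K m b) :
    m (b (m j + Finsupp.single t 1)) ≤ m j + Finsupp.single t 1 :=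
  hb.gen_le le_self_add

theorem apply_le_of_ne (hb : IsDecompositionFunction K m b) (hst : s ≠ t) :
    m (b (m j + Finsupp.single t 1)) s ≤ m j s := by
  simpa [Finsupp.single_apply, hst.symm] using Finsupp.le_def.1 (hb.gen_le_add_single (j := j) (t := t)) s

theorem mem_mset_of_ne (hb : IsDecompositionFunction K m b)
    (hne : b (m j + Finsupp.single t 1) ≠ j) : t ∈ mset K m j := by
  by_contra hnot
  have hlt : b (m j + Finsupp.single t 1) < j :=
    lt_of_le_of_ne (hb.le_of_gen_le le_self_add) hne
  exact hnot (mem_mset_iff.2 ⟨_, hlt, hb.gen_le_add_single⟩)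

/-- A witness `m r ∣ x_s m_{j'}`, `r < j'`, would divide `x_t m_j` if the exponent of `x_s`
dropped, contradicting the minimality of `j' = b(x_t m_j)`. -/
theorem apply_le_of_mem_mset (hb : IsDecompositionFunction K m b)
    (hs : s ∈ mset K m (b (m j + Finsupp.single t 1))) :
    m j s ≤ m (b (m j + Finsupp.single t 1)) s := by
  have hu := Finsupp.le_def.1 (hb.gen_le_add_single (j := j) (t := t))
  obtain ⟨r, hr, hle⟩ := mem_mset_iff.1 hs
  refine le_of_not_gt fun hlt => (hb.le_of_gen_le (i := r) ?_).not_gt hr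
  refine hle.trans (Finsupp.le_def.2 fun a => ?_)
  rcases eq_or_ne a s with rfl | has
  · have := hu a
    simp only [Finsupp.add_apply, Finsupp.single_eq_same] at this ⊢
    omega
  · simpa [Finsupp.single_apply, has.symm] using hu a

theorem apply_eq_of_mem_mset (hb : IsDecompositionFunction K m b)
    (hs : s ∈ mset K m (b (m j + Finsupp.single t 1))) (hst : s ≠ t) :
    m (b (m j + Finsupp.single t 1)) s = m j s :=
  le_antisymm (hb.apply_le_of_ne hst) (hb.apply_le_of_mem_mset hs)

theorem apply_self_eq_succ (hb : IsDecompositionFunction K m b) (hmin : MinimalGens m)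
    (hne : b (m j + Finsupp.single t 1) ≠ j) :
    m (b (m j + Finsupp.single t 1)) t = m j t + 1 := by
  have hle : m (b (m j + Finsupp.single t 1)) t ≤ m j t + 1 := by
    simpa using Finsupp.le_def.1 (hb.gen_le_add_single (j := j) (t := t)) t
  suffices m j t < m (b (m j + Finsupp.single t 1)) t by omega
  refine lt_of_not_ge fun hge => hne (hmin _ _ (Finsupp.le_def.2 fun a => ?_))
  rcases eq_or_ne a t with rfl | hat
  · exact hge
  · exact hb.apply_le_of_ne hat

end IsDecompositionFunction

variable {σ : ℕ → Fin n} {p : ℕ}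

variable (m b j σ) in
noncomputable def chainIdx : ℕ → Fin k
  | 0 => j
  | i + 1 => b (m (chainIdx i) + Finsupp.single (σ i) 1)

@[simp]
theorem chainIdx_zero : chainIdx m b j σ 0 = j := rfl

theorem chainSeq_eq_chainIdx (i : ℕ) : chainSeq m b (m j) σ i = m (chainIdx m b j σ i) := by
  induction i with
  | zero => rfl
  | succ i ih => rw [chainSeq, ih]; rfl

theorem chainIdx_succ_ne (hnd : Nondeg m b (m j) σ p) {i : ℕ} (hi : i < p) :
    chainIdx m b j σ (i + 1) ≠ chainIdx m b j σ i := fun h => by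
  have := hnd (show i + 1 ∈ Set.Iic p from hi) (show i ∈ Set.Iic p from hi.le)
    (by rw [chainSeq_eq_chainIdx, chainSeq_eq_chainIdx, h])
  omega

theorem mem_mset_chainIdx (hb : IsDecompositionFunction K m b) (hnd : Nondeg m b (m j) σ p)
    {i : ℕ} (hi : i < p) : σ i ∈ mset K m (chainIdx m b j σ i) :=
  hb.mem_mset_of_ne (chainIdx_succ_ne hnd hi)

theorem mset_chainIdx_subset (hb : IsDecompositionFunction K m b) (hreg : IsRegularDecomp K m b)
    (hnd : Nondeg m b (m j) σ p) {i l : ℕ} (hil : i ≤ l) (hl : l ≤ p) :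
    mset K m (chainIdx m b j σ l) ⊆ mset K m (chainIdx m b j σ i) := by
  induction l, hil using Nat.le_induction with
  | base => exact subset_rfl
  | succ l _ ih => exact (hreg _ _ (mem_mset_chainIdx hb hnd hl)).trans (ih (by omega))

theorem chainIdx_apply_eq (hb : IsDecompositionFunction K m b) (hreg : IsRegularDecomp K m b)
    (hnd : Nondeg m b (m j) σ p) (hσ : Set.InjOn σ (Set.Iio p)) {i l : ℕ} (hil : i ≤ l)
    (hl : l < p) : m (chainIdx m b j σ i) (σ l) = m j (σ l) := by
  induction i with
  | zero => rfl
  | succ i ih =>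
    have hne : σ l ≠ σ i := fun h => by
      have := hσ (show l ∈ Set.Iio p from hl) ((Nat.lt_of_succ_le hil).trans hl) h
      omega
    rw [← ih (by omega)]
    exact hb.apply_eq_of_mem_mset
      (mset_chainIdx_subset hb hreg hnd hil hl.le (mem_mset_chainIdx hb hnd hl)) hne

theorem chainIdx_succ_apply_self (hb : IsDecompositionFunction K m b) (hmin : MinimalGens m)
    (hreg : IsRegularDecomp K m b) (hnd : Nondeg m b (m j) σ p) (hσ : Set.InjOn σ (Set.Iio p))
    {l : ℕ} (hl : l < p) : m (chainIdx m b j σ (l + 1)) (σ l) = m j (σ l) + 1 := by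
  rw [← chainIdx_apply_eq hb hreg hnd hσ le_rfl hl]
  exact hb.apply_self_eq_succ hmin (chainIdx_succ_ne hnd hl)

end MonomialIdeal

theorem stmt4_general (K : Type*) [Field K] {n k : ℕ} (m : Fin k → (Fin n →₀ ℕ))
    (hmin : MinimalGens m)
    (b : (Fin n →₀ ℕ) → Fin k) (hb : IsDecompositionFunction K m b)
    (hreg : IsRegularDecomp K m b)
    (j : Fin k) (α : Finset (Fin n))
    (p : ℕ)
    (σ : ℕ → Fin n) (hσ : PermOf σ p α)
    (hnd : Nondeg m b (m j) σ p) :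
    AffineIndependent ℝ (fun i : Fin (p + 1) => toR (chainSeq m b (m j) σ i)) ∧
    Module.finrank ℝ
        (vectorSpan ℝ (Set.range (fun i : Fin (p + 1) => toR (chainSeq m b (m j) σ i))))
      = p := by
  have hAI : AffineIndependent ℝ (fun i : Fin (p + 1) => toR (chainSeq m b (m j) σ i)) := by
    refine affineIndependent_of_triangular _ (fun l => LinearMap.proj (σ l))
      (fun l => ?_) (fun i l hil => ?_)
    · simp [toR, chainSeq_eq_chainIdx, chainIdx_succ_apply_self hb hmin hreg hnd hσ.1 l.isLt]
    · simp [toR, chainSeq_eq_chainIdx,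
        chainIdx_apply_eq hb hreg hnd hσ.1 (Nat.succ_le_of_lt hil) l.isLt]
  exact ⟨hAI, hAI.finrank_vectorSpan (Fintype.card_fin _)⟩

/-- for a nondegenerate `ch(m, set(m), σ)` with `|set(m)| = p`, the `p+1`
exponent vectors `v_0, …, v_p`, regarded as points of `ℝⁿ`, are affinely independent;
consequently `ch(m, set(m), σ)` is a geometric simplex of dimension `p`. -/
theorem stmt4 (K : Type*) [Field K] {n k : ℕ} (m : Fin k → (Fin n →₀ ℕ))
    (hmin : MinimalGens m) (hlq : HasLinearQuotients K m)
    (b : (Fin n →₀ ℕ) → Fin k) (hb : IsDecompositionFunction K m b)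
    (hreg : IsRegularDecomp K m b)
    (j : Fin k) (α : Finset (Fin n)) (hα : ∀ a : Fin n, a ∈ α ↔ a ∈ mset K m j)
    (p : ℕ) (hcard : α.card = p)
    (σ : ℕ → Fin n) (hσ : PermOf σ p α)
    (hnd : Nondeg m b (m j) σ p) :
    AffineIndependent ℝ (fun i : Fin (p + 1) => toR (chainSeq m b (m j) σ i)) ∧
    Module.finrank ℝ
        (vectorSpan ℝ (Set.range (fun i : Fin (p + 1) => toR (chainSeq m b (m j) σ i))))
      = p :=
  stmt4_general K m hmin b hb hreg j α p σ hσ hnd
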